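/- Let φ be a PPLTL formula over P, let τ = s₀⋯sₙ be a finite nonempty trace over P, and let τ⁺ = σ₋₁ σ₀ ⋯ σ_{n−1} be the corresponding trace over Σφ, where σ₋₁ assigns ⊥ to every proposition in Σφ and σᵢ(«ϕ») = val(ϕ, σ_{i−1}, sᵢ) for 0 ≤ i ≤ n. Then τ ⊨ φ if and only if val(φ, last(τ⁺), last(τ)), i.e., if and only if val(φ, σ_{n−1}, sₙ). -/

import Mathlib

inductive PPLTL (P : Type) : Type
  | atom : P → PPLTL P
  | neg : PPLTL P → PPLTL P
  | conj : PPLTL P → PPLTL P → PPLTL P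
  | yesterday : PPLTL P → PPLTL P
  | since : PPLTL P → PPLTL P → PPLTL P
  deriving DecidableEq

namespace PPLTL

variable {P : Type}

/-- Satisfaction of a pure-past LTL formula on the trace `τ` at instant `i`. -/
def Sat (τ : ℕ → Set P) : PPLTL P → ℕ → Prop
  | atom p, i => p ∈ τ i
  | neg φ, i => ¬ Sat τ φ i
  | conj φ ψ, i => Sat τ φ i ∧ Sat τ ψ i
  | yesterday φ, i => 1 ≤ i ∧ Sat τ φ (i - 1)
  | since φ ψ, i => ∃ k, k ≤ i ∧ Sat τ ψ k ∧ ∀ j, k < j → j ≤ i → Sat τ φ j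

/-- Disjunction abbreviation. -/
def por (φ ψ : PPLTL P) : PPLTL P := neg (conj (neg φ) (neg ψ))

/-- Previous normal form transformation. -/
def pnf : PPLTL P → PPLTL P
  | atom p => atom p
  | neg φ => neg (pnf φ)
  | conj φ ψ => conj (pnf φ) (pnf ψ)
  | yesterday φ => yesterday φ
  | since φ ψ => por (pnf ψ) (conj (pnf φ) (yesterday (since φ ψ)))

/-- The set of subformulas of a formula. -/
def sub [DecidableEq P] : PPLTL P → Finset (PPLTL P)
  | atom p => {atom p}
  | neg φ => insert (neg φ) (sub φ)
  | conj φ ψ => insert (conj φ ψ) (sub φ ∪ sub ψ)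
  | yesterday φ => insert (yesterday φ) (sub φ)
  | since φ ψ => insert (since φ ψ) (sub φ ∪ sub ψ)


/-- The predicate `val(ϕ, σ, s)`: truth of ϕ given the propositional
interpretation `σ` over the quoted subformulas Σφ (here modelled as a
predicate on formulas) and the current propositional interpretation `s`. -/
def val (σ : PPLTL P → Prop) (s : Set P) : PPLTL P → Prop
  | atom p => p ∈ s
  | neg φ => ¬ val σ s φ
  | conj φ ψ => val σ s φ ∧ val σ s ψ
  | yesterday φ => σ φ
  | since φ ψ => val σ s ψ ∨ (val σ s φ ∧ σ (since φ ψ))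

/-- The interpretation `σ₋₁` assigning ⊥ to every quoted proposition. -/
def sigmaInit : PPLTL P → Prop := fun _ => False

/-- `sigmaSeq τ 0 = σ₋₁` and `sigmaSeq τ (i+1) = σᵢ`, where
`σᵢ(«ϕ») = val(ϕ, σ_{i-1}, sᵢ)`; i.e. `sigmaSeq τ i = σ_{i-1}`. -/
def sigmaSeq (τ : ℕ → Set P) : ℕ → PPLTL P → Prop
  | 0 => sigmaInit
  | i + 1 => fun ϕ => val (sigmaSeq τ i) (τ i) ϕ

/-!
Proof idea: by induction on `φ` one shows that `sigmaSeq τ (i + 1)` marks exactly the quoted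
subformulas true at instant `i`, so that `val` evaluates `Y ϕ` correctly; for `ϕ₁ S ϕ₂`, `val`
implements the expansion law `ϕ₁ S ϕ₂ ≡ ϕ₂ ∨ (ϕ₁ ∧ Y (ϕ₁ S ϕ₂))`, and an inner induction on the
instant reduces the claim to that law.
-/

section Semantics

variable (τ : ℕ → Set P) (φ ψ : PPLTL P)

lemma not_sat_yesterday_zero : ¬ Sat τ (yesterday φ) 0 :=
  fun h => Nat.not_succ_le_zero 0 h.1

lemma sat_yesterday_succ (n : ℕ) : Sat τ (yesterday φ) (n + 1) ↔ Sat τ φ n :=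
  ⟨fun h => h.2, fun h => ⟨Nat.le_add_left 1 n, h⟩⟩

lemma sat_since_zero : Sat τ (since φ ψ) 0 ↔ Sat τ ψ 0 := by
  constructor
  · rintro ⟨k, hk, hψ, -⟩
    rwa [Nat.le_zero.1 hk] at hψ
  · exact fun hψ => ⟨0, le_rfl, hψ, fun j hj hj' => absurd hj (not_lt.2 hj')⟩

lemma sat_since_succ (n : ℕ) :
    Sat τ (since φ ψ) (n + 1) ↔ Sat τ ψ (n + 1) ∨ (Sat τ φ (n + 1) ∧ Sat τ (since φ ψ) n) := by
  constructor
  · rintro ⟨k, hk, hψ, hφ⟩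
    rcases hk.eq_or_lt with rfl | hk
    · exact .inl hψ
    · exact .inr ⟨hφ _ hk le_rfl, k, Nat.le_of_lt_succ hk, hψ,
        fun j hkj hj => hφ j hkj (hj.trans n.le_succ)⟩
  · rintro (hψ | ⟨hφ, k, hk, hψ, hφ'⟩)
    · exact ⟨n + 1, le_rfl, hψ, fun j hj hj' => absurd hj (not_lt.2 hj')⟩
    · refine ⟨k, hk.trans n.le_succ, hψ, fun j hkj hj => ?_⟩
      rcases hj.eq_or_lt with rfl | hj
      · exact hφ
      · exact hφ' j hkj (Nat.le_of_lt_succ hj)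

end Semantics

lemma val_since_sigmaInit (s : Set P) (φ ψ : PPLTL P) :
    val sigmaInit s (since φ ψ) ↔ val sigmaInit s ψ :=
  or_iff_left fun h => h.2

/-- For a finite nonempty trace `τ = s₀ ⋯ sₙ` and the
corresponding trace `τ⁺ = σ₋₁ σ₀ ⋯ σ_{n-1}` over Σφ
(where `σ₋₁` is everywhere false and `σᵢ(«ϕ») = val(ϕ, σ_{i-1}, sᵢ)`),
we have `τ ⊨ φ` iff `val(φ, last τ⁺, last τ)`, i.e. iff `val(φ, σ_{n-1}, sₙ)`.
Here `sigmaSeq τ n = σ_{n-1}`. -/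
theorem sat_iff_val_last (φ : PPLTL P) (τ : ℕ → Set P) (n : ℕ) :
    Sat τ φ n ↔ val (sigmaSeq τ n) (τ n) φ := by
  induction φ generalizing n with
  | atom p => rfl
  | neg φ ih => exact not_congr (ih n)
  | conj φ ψ ihφ ihψ => exact and_congr (ihφ n) (ihψ n)
  | yesterday φ ih =>
    cases n with
    | zero => exact iff_of_false (not_sat_yesterday_zero τ φ) id
    | succ i => exact (sat_yesterday_succ τ φ i).trans (ih i)
  | since φ ψ ihφ ihψ =>
    induction n with
    | zero => rw [sat_since_zero, ihψ]; exact (val_since_sigmaInit (τ 0) φ ψ).symm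
    | succ i ih => rw [sat_since_succ, ihφ, ihψ, ih]; rfl

end PPLTL
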